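/- For integers n ≥ k ≥ 1 and d ≥ 1, the leading inverse-Chiribella coefficient satisfies 1/q̂(n,k,k) = (n)_k / (n+k+d−1)_k ≥ (1 − (k+d−1)/(n+d))^k ≥ 1 − k(k+d−1)/(n+d), where (x)_k = x(x−1)⋯(x−k+1) is the falling factorial. -/

import Mathlib

lemma fallFact_cast_aux (m k : ℕ) (h : k ≤ m) :
    (∏ j ∈ Finset.range k, ((m : ℝ) - j)) = (m.descFactorial k : ℝ) := by
  rw [Nat.descFactorial_eq_prod_range, Nat.cast_prod]
  refine Finset.prod_congr rfl fun j hj => ?_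
  rw [Finset.mem_range] at hj
  rw [Nat.cast_sub (by omega)]

lemma key_identity (n k d : ℕ) (hd : 1 ≤ d) (hk : 1 ≤ k) (hkn : k ≤ n) :
    ((n.choose k : ℝ) * ((n + d - 1).choose n : ℝ)) * (((n+k+d-1).descFactorial k : ℕ) : ℝ)
      = (((n+k).choose k : ℝ) * ((n + k + d - 1).choose (n+k) : ℝ)) * ((n.descFactorial k : ℕ) : ℝ) := by
  obtain ⟨e, rfl⟩ : ∃ e, d = e + 1 := ⟨d - 1, by omega⟩
  obtain ⟨m, rfl⟩ : ∃ m, n = k + m := ⟨n - k, by omega⟩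
  have h1 : k + m + (e + 1) - 1 = k + m + e := by omega
  have h2 : k + m + k + (e + 1) - 1 = k + m + k + e := by omega
  rw [h1, h2]
  have c1 := Nat.cast_choose ℝ (show k + m ≤ k + m + e by omega)
  have c2 := Nat.cast_choose ℝ (show k ≤ k + m by omega)
  have c3 := Nat.cast_choose ℝ (show k ≤ k + m + k by omega)
  have c4 := Nat.cast_choose ℝ (show k + m + k ≤ k + m + k + e by omega)
  have d1 : (((k+m+k+e).descFactorial k : ℕ) : ℝ) * (Nat.factorial (k+m+k+e-k) : ℝ) = (Nat.factorial (k+m+k+e) : ℝ) := by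
    rw [← Nat.cast_mul, mul_comm, Nat.factorial_mul_descFactorial (by omega)]
  have d2 : (((k+m).descFactorial k : ℕ) : ℝ) * (Nat.factorial (k+m-k) : ℝ) = (Nat.factorial (k+m) : ℝ) := by
    rw [← Nat.cast_mul, mul_comm, Nat.factorial_mul_descFactorial (by omega)]
  have e1 : k + m + e - (k + m) = e := by omega
  have e2 : k + m - k = m := by omega
  have e3 : k + m + k - k = k + m := by omega
  have e4 : k + m + k + e - (k + m + k) = e := by omega
  have e5 : k + m + k + e - k = k + m + e := by omega
  rw [e1] at c1; rw [e2] at c2 d2; rw [e3] at c3; rw [e4] at c4; rw [e5] at d1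
  have f1 : (Nat.factorial (k+m+e) : ℝ) ≠ 0 := Nat.cast_ne_zero.2 (Nat.factorial_ne_zero _)
  have f2 : (Nat.factorial m : ℝ) ≠ 0 := Nat.cast_ne_zero.2 (Nat.factorial_ne_zero _)
  have D1 : (((k+m+k+e).descFactorial k : ℕ) : ℝ) = Nat.factorial (k+m+k+e) / Nat.factorial (k+m+e) :=
    eq_div_of_mul_eq f1 d1
  have D2 : (((k+m).descFactorial k : ℕ) : ℝ) = Nat.factorial (k+m) / Nat.factorial m :=
    eq_div_of_mul_eq f2 d2
  rw [c1, c2, c3, c4, D1, D2]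
  have f3 : (Nat.factorial (k+m) : ℝ) ≠ 0 := Nat.cast_ne_zero.2 (Nat.factorial_ne_zero _)
  have f4 : (Nat.factorial e : ℝ) ≠ 0 := Nat.cast_ne_zero.2 (Nat.factorial_ne_zero _)
  have f5 : (Nat.factorial k : ℝ) ≠ 0 := Nat.cast_ne_zero.2 (Nat.factorial_ne_zero _)
  have f6 : (Nat.factorial (k+m+k) : ℝ) ≠ 0 := Nat.cast_ne_zero.2 (Nat.factorial_ne_zero _)
  field_simp

/-- `d[m] = dim ∨^m ℂ^d = C(m+d−1, m)`. -/
noncomputable def dimSym (d m : ℕ) : ℝ := ((m + d - 1).choose m : ℝ)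

/-- Inverse Chiribella coefficients
`q(n,k,t) = (−1)^{t+k}·C(n+t,t)·C(k,t)/C(n,k)·d[n+t]/d[n+k]`. -/
noncomputable def qCoef (d n k t : ℕ) : ℝ :=
  (-1) ^ (t + k) * (((n + t).choose t * k.choose t : ℕ) : ℝ) / (n.choose k : ℝ) *
    (dimSym d (n + t) / dimSym d (n + k))

/-- Rescaled (channel-normalized) inverse Chiribella coefficients
`q̂(n,k,t) = q(n,k,t)·d[n+k]·d[k]/(d[n]·d[t])`. -/
noncomputable def qHat (d n k t : ℕ) : ℝ :=
  qCoef d n k t * (dimSym d (n + k) * dimSym d k) / (dimSym d n * dimSym d t)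

/-- Falling factorial `(x)_k = x(x−1)⋯(x−k+1)` for real `x`. -/
noncomputable def fallFact (x : ℝ) (k : ℕ) : ℝ := ∏ j ∈ Finset.range k, (x - j)

lemma dimSym_pos (d m : ℕ) (hd : 1 ≤ d) : 0 < dimSym d m := by
  unfold dimSym
  exact_mod_cast Nat.choose_pos (by omega)

/-- Leading inverse-Chiribella coefficient bound:
`1/q̂(n,k,k) = (n)_k/(n+k+d−1)_k ≥ (1−(k+d−1)/(n+d))^k ≥ 1−k(k+d−1)/(n+d)`. -/
theorem qHat_leading_coefficient_bound (n k d : ℕ)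
    (hd : 1 ≤ d) (hk : 1 ≤ k) (hkn : k ≤ n) :
    1 / qHat d n k k = fallFact (n : ℝ) k / fallFact ((n : ℝ) + k + d - 1) k ∧
    fallFact (n : ℝ) k / fallFact ((n : ℝ) + k + d - 1) k
      ≥ (1 - ((k : ℝ) + d - 1) / ((n : ℝ) + d)) ^ k ∧
    (1 - ((k : ℝ) + d - 1) / ((n : ℝ) + d)) ^ k
      ≥ 1 - (k : ℝ) * ((k : ℝ) + d - 1) / ((n : ℝ) + d) := by
  have hnd : (0 : ℝ) < (n : ℝ) + d := by positivity
  have hcast : ((n : ℝ) + k + d - 1) = (((n + k + d - 1 : ℕ) : ℕ) : ℝ) := by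
    push_cast [Nat.cast_sub (show 1 ≤ n + k + d by omega)]; ring
  -- rewrite fallFacts as descFactorials
  have hf1 : fallFact (n : ℝ) k = (n.descFactorial k : ℝ) := fallFact_cast_aux n k hkn
  have hf2 : fallFact ((n : ℝ) + k + d - 1) k = ((n + k + d - 1).descFactorial k : ℝ) := by
    rw [fallFact, hcast, fallFact_cast_aux _ k (by omega)]
  refine ⟨?_, ?_, ?_⟩
  · -- Part 1
    have hq : qHat d n k k =
        ((n + k).choose k : ℝ) * dimSym d (n + k) / ((n.choose k : ℝ) * dimSym d n) := by
      have h1 : dimSym d (n + k) ≠ 0 := (dimSym_pos d (n + k) hd).ne'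
      have h2 : dimSym d k ≠ 0 := (dimSym_pos d k hd).ne'
      have h3 : dimSym d n ≠ 0 := (dimSym_pos d n hd).ne'
      have h4 : (n.choose k : ℝ) ≠ 0 := by
        exact_mod_cast (Nat.choose_pos hkn).ne'
      unfold qHat qCoef
      rw [Nat.choose_self]
      have : ((-1 : ℝ)) ^ (k + k) = 1 := by
        rw [← two_mul, pow_mul]; norm_num
      rw [this]
      push_cast
      field_simp
    rw [hq, hf1, hf2]
    have h1 : ((n + k).choose k : ℝ) * dimSym d (n + k) ≠ 0 := by
      have := dimSym_pos d (n + k) hd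
      have : (0:ℝ) < ((n + k).choose k : ℝ) := by exact_mod_cast Nat.choose_pos (by omega)
      positivity
    have h2 : ((n + k + d - 1).descFactorial k : ℝ) ≠ 0 := by
      have : (n + k + d - 1).descFactorial k ≠ 0 := by
        intro h; exact absurd (Nat.descFactorial_eq_zero_iff_lt.1 h) (by omega)
      exact_mod_cast this
    rw [one_div, inv_div, div_eq_div_iff (by positivity) h2]
    have key := key_identity n k d hd hk hkn
    unfold dimSym
    have e1 : n + k + d - 1 + d - 1 = n + k + d - 1 + (d - 1) := by omega
    -- dimSym d (n+k) = choose (n+k+d-1) (n+k)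
    have : ((n.descFactorial k : ℕ) : ℝ) * (((n + k).choose k : ℝ) * (((n + k) + d - 1).choose (n + k) : ℝ)) =
        ((n.choose k : ℝ) * (((n) + d - 1).choose n : ℝ)) * (((n + k + d - 1).descFactorial k : ℕ) : ℝ) := by
      have : (n + k) + d - 1 = n + k + d - 1 := by omega
      rw [this]
      linarith [key]
    linarith [this]
  · -- Part 2
    rw [fallFact, fallFact]
    have hden : ∀ j ∈ Finset.range k, (0:ℝ) < (n : ℝ) + k + d - 1 - j := by
      intro j hj
      rw [Finset.mem_range] at hj
      have : (j : ℝ) < k := by exact_mod_cast hj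
      have hd' : (1:ℝ) ≤ d := by exact_mod_cast hd
      linarith
    rw [ge_iff_le]
    have hc : 1 - ((k : ℝ) + d - 1) / ((n : ℝ) + d) = ((n:ℝ) - k + 1)/((n:ℝ) + d) := by
      field_simp
      ring
    have key2 : ((1 - ((k : ℝ) + d - 1) / ((n : ℝ) + d)) ^ k)
        = ∏ _j ∈ Finset.range k, (((n:ℝ) - k + 1)/((n:ℝ) + d)) := by
      rw [hc, Finset.prod_const, Finset.card_range]
    rw [key2, ← Finset.prod_div_distrib]
    apply Finset.prod_le_prod
    · intro j _
      have hkr : (k:ℝ) ≤ n := by exact_mod_cast hkn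
      apply div_nonneg <;> [linarith; positivity]
    · intro j hj
      rw [Finset.mem_range] at hj
      have hjr : (j : ℝ) ≤ (k:ℝ) - 1 := by
        have : (j:ℝ) + 1 ≤ k := by exact_mod_cast hj
        linarith
      have hkr : (k:ℝ) ≤ n := by exact_mod_cast hkn
      have hd' : (1:ℝ) ≤ d := by exact_mod_cast hd
      rw [div_le_div_iff₀ hnd (by linarith)]
      nlinarith [hjr, hkr, hd']
  · -- Part 3 : Bernoulli
    have hkr : (k:ℝ) ≤ n := by exact_mod_cast hkn
    have hd' : (1:ℝ) ≤ d := by exact_mod_cast hd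
    have hx : ((k : ℝ) + d - 1) / ((n : ℝ) + d) ≤ 1 := by
      rw [div_le_one hnd]; linarith
    have hx0 : (0:ℝ) ≤ ((k : ℝ) + d - 1) / ((n : ℝ) + d) := by
      apply div_nonneg <;> linarith
    have := one_add_mul_le_pow (a := -(((k : ℝ) + d - 1) / ((n : ℝ) + d))) (by linarith) k
    rw [ge_iff_le]
    calc 1 - (k : ℝ) * ((k : ℝ) + d - 1) / ((n : ℝ) + d)
        = 1 + (k:ℝ) * (-(((k : ℝ) + d - 1) / ((n : ℝ) + d))) := by ring
      _ ≤ (1 + -(((k : ℝ) + d - 1) / ((n : ℝ) + d))) ^ k := this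
      _ = (1 - ((k : ℝ) + d - 1) / ((n : ℝ) + d)) ^ k := by ring_nf
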